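/- arXiv:math/0202239 — 4 statements merged into one kernel-verified Lean document; each statement's English description precedes it below -/
import Mathlib

section
/- For every integer m, the circular sign σ(m) equals the sign of sin((2m+1)π/(2q)); that is, σ(m) = 1 if and only if sin((2m+1)π/(2q)) > 0, and σ(m) = -1 if and only if sin((2m+1)π/(2q)) < 0 (and sin((2m+1)π/(2q)) is never zero). -/
open Real

theorem circular_sign_eq_sign_of_sin
    (q : ℤ) (hq : 0 < q) (σ : ℤ → ℤ)
    (hσ : ∀ m : ℤ, σ m = if m % (2 * q) < q then 1 else -1) :
    ∀ m : ℤ,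
      (σ m = 1 ↔ Real.sin ((2 * (m : ℝ) + 1) * Real.pi / (2 * (q : ℝ))) > 0) ∧
      (σ m = -1 ↔ Real.sin ((2 * (m : ℝ) + 1) * Real.pi / (2 * (q : ℝ))) < 0) ∧
      Real.sin ((2 * (m : ℝ) + 1) * Real.pi / (2 * (q : ℝ))) ≠ 0 := by
  intro m
  have h2q : (0:ℤ) < 2 * q := by omega
  have hr0 : 0 ≤ m % (2 * q) := Int.emod_nonneg m (by omega)
  have hr2 : m % (2 * q) < 2 * q := Int.emod_lt_of_pos m h2q
  have hk : m = 2 * q * (m / (2 * q)) + m % (2 * q) := (Int.mul_ediv_add_emod m (2 * q)).symm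
  have hq' : (0:ℝ) < (q:ℝ) := by exact_mod_cast hq
  set r : ℤ := m % (2 * q) with hrdef
  set k : ℤ := m / (2 * q) with hkdef
  have hmR : (m:ℝ) = 2 * q * k + r := by exact_mod_cast hk
  have hangle : (2 * (m : ℝ) + 1) * Real.pi / (2 * (q : ℝ))
      = (2 * (r:ℝ) + 1) * Real.pi / (2 * (q : ℝ)) + (k:ℝ) * (2 * Real.pi) := by
    rw [hmR]; field_simp; ring
  rw [hangle, Real.sin_add_int_mul_two_pi]
  by_cases hc : r < q
  · have hθ0 : 0 < (2 * (r:ℝ) + 1) * Real.pi / (2 * (q : ℝ)) := by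
      apply div_pos (mul_pos _ Real.pi_pos) (by linarith)
      have : (0:ℝ) ≤ (r:ℝ) := by exact_mod_cast hr0
      linarith
    have hθπ : (2 * (r:ℝ) + 1) * Real.pi / (2 * (q : ℝ)) < Real.pi := by
      rw [div_lt_iff₀ (by linarith)]
      have : (2 * (r:ℝ) + 1) < 2 * q := by
        have : 2 * r + 1 < 2 * q := by omega
        exact_mod_cast this
      nlinarith [Real.pi_pos]
    have hsin := Real.sin_pos_of_pos_of_lt_pi hθ0 hθπ
    have hσm : σ m = 1 := by rw [hσ m, if_pos hc]
    exact ⟨⟨fun _ => hsin, fun _ => hσm⟩,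
      ⟨fun h => by rw [hσm] at h; omega, fun h => absurd hsin (by linarith)⟩,
      ne_of_gt hsin⟩
  · have hθπ : Real.pi < (2 * (r:ℝ) + 1) * Real.pi / (2 * (q : ℝ)) := by
      rw [lt_div_iff₀ (by linarith)]
      have : (2:ℝ) * q < 2 * (r:ℝ) + 1 := by
        have : 2 * q < 2 * r + 1 := by omega
        exact_mod_cast this
      nlinarith [Real.pi_pos]
    have hθ2π : (2 * (r:ℝ) + 1) * Real.pi / (2 * (q : ℝ)) < 2 * Real.pi := by
      rw [div_lt_iff₀ (by linarith)]
      have : (2 * (r:ℝ) + 1) < 2 * (2 * q) := by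
        have : 2 * r + 1 < 2 * (2 * q) := by omega
        exact_mod_cast this
      nlinarith [Real.pi_pos]
    have hsin : Real.sin ((2 * (r:ℝ) + 1) * Real.pi / (2 * (q : ℝ))) < 0 := by
      have : (2 * (r:ℝ) + 1) * Real.pi / (2 * (q : ℝ))
          = ((2 * (r:ℝ) + 1) * Real.pi / (2 * (q : ℝ)) - Real.pi) + Real.pi := by ring
      rw [this, Real.sin_add_pi]
      have := Real.sin_pos_of_pos_of_lt_pi (x := (2 * (r:ℝ) + 1) * Real.pi / (2 * (q : ℝ)) - Real.pi)
        (by linarith) (by linarith)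
      linarith
    have hσm : σ m = -1 := by rw [hσ m, if_neg hc]
    exact ⟨⟨fun h => by rw [hσm] at h; omega, fun h => absurd hsin (by linarith)⟩,
      ⟨fun _ => hsin, fun _ => hσm⟩, ne_of_lt hsin⟩
end

section
/- Suppose gcd(p, 2q) = 1 and n ≥ 2q - 1. Then the map sending a residue c ∈ ℤ/2qℤ to the tuple (v_c(0), v_c(1), ..., v_c(n)) is injective; that is, the construction procedure produces exactly 2q distinct vertex superscripts of length n+1. -/
theorem vertex_prefixes_injective
    (p q n : ℕ) (hp : 0 < p) (hq : 0 < q) (hn : 0 < n)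
    (hgcd : Nat.gcd p (2 * q) = 1) (hlen : 2 * q - 1 ≤ n) (σ : ℤ → ℤ)
    (hσ : ∀ m : ℤ, σ m = if m % (2 * (q : ℤ)) < (q : ℤ) then 1 else -1)
    (v : ℤ → ℕ → ℤ) (hv : ∀ (c : ℤ) (i : ℕ), v c i = σ (c + (i : ℤ) * (p : ℤ))) :
    ∀ c c' : ℤ, (∀ i ≤ n, v c i = v c' i) → c ≡ c' [ZMOD (2 * q)] := by
  intro c c' H
  set N : ℤ := 2 * (q : ℤ) with hN
  have hNpos : 0 < N := by positivity
  have hσmod : ∀ a b : ℤ, a % N = b % N → σ a = σ b := by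
    intro a b h
    rw [hσ, hσ]
    rw [hN] at h
    rw [h]
  have hcop : IsCoprime (p : ℤ) N := by
    rw [Int.isCoprime_iff_gcd_eq_one]
    have h2 : ((2 * q : ℕ) : ℤ) = N := by push_cast [hN]; ring
    rw [← h2, Int.gcd_natCast_natCast, hgcd]
  obtain ⟨u, w, huw⟩ := hcop
  set d : ℤ := c' - c with hd
  -- Step 1: σ is invariant under shift by d
  have G : ∀ m : ℤ, σ m = σ (m + d) := by
    intro m
    set x : ℤ := u * (m - c) with hx
    have hxc : (c + x * (p : ℤ)) % N = m % N := by
      have hdvd : N ∣ (m - (c + x * (p : ℤ))) := by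
        refine ⟨w * (m - c), ?_⟩
        have h1 : u * (p : ℤ) + w * N = 1 := huw
        calc m - (c + x * (p : ℤ)) = (m - c) * (1 - u * (p : ℤ)) := by rw [hx]; ring
          _ = (m - c) * (w * N) := by rw [← h1]; ring
          _ = N * (w * (m - c)) := by ring
      exact (Int.modEq_iff_dvd.mpr hdvd)
    set i : ℕ := (x % N).toNat with hi
    have hiZ : (i : ℤ) = x % N := Int.toNat_of_nonneg (Int.emod_nonneg x hNpos.ne')
    have hilt : (i : ℤ) < N := by rw [hiZ]; exact Int.emod_lt_of_pos x hNpos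
    have hin : i ≤ n := by
      have : (i : ℤ) < 2 * (q : ℤ) := by rw [← hN]; exact hilt
      have hi2q : i < 2 * q := by exact_mod_cast this
      omega
    have himod : ((i : ℤ) * (p : ℤ)) % N = (x * (p : ℤ)) % N := by
      have : (i : ℤ) % N = x % N := by
        rw [hiZ, Int.emod_emod_of_dvd _ dvd_rfl]
      exact Int.ModEq.mul_right _ this
    have h1 : (c + (i : ℤ) * (p : ℤ)) % N = m % N := by
      calc (c + (i : ℤ) * (p : ℤ)) % N = (c + x * (p : ℤ)) % N :=
            Int.ModEq.add_left c himod
        _ = m % N := hxc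
    have h2 : (c' + (i : ℤ) * (p : ℤ)) % N = (m + d) % N := by
      have : c' + (i : ℤ) * (p : ℤ) = (c + (i : ℤ) * (p : ℤ)) + d := by rw [hd]; ring
      rw [this]
      exact Int.ModEq.add_right d h1
    have hvv := H i hin
    rw [hv, hv] at hvv
    calc σ m = σ (c + (i : ℤ) * (p : ℤ)) := (hσmod _ _ h1).symm
      _ = σ (c' + (i : ℤ) * (p : ℤ)) := hvv
      _ = σ (m + d) := hσmod _ _ h2
  -- Step 2: deduce N ∣ d
  have hdvd : N ∣ d := by
    by_contra hnd
    set e : ℤ := d % N with he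
    have he0 : 0 ≤ e := Int.emod_nonneg d hNpos.ne'
    have heN : e < N := Int.emod_lt_of_pos d hNpos
    have hene : e ≠ 0 := fun h => hnd (Int.dvd_of_emod_eq_zero (he ▸ h))
    have he1 : 1 ≤ e := lt_of_le_of_ne he0 (Ne.symm hene)
    -- σ m = σ (m + e) for all m
    have G' : ∀ m : ℤ, σ m = σ (m + e) := by
      intro m
      rw [G m]
      apply hσmod
      apply Int.ModEq.add_left m
      show d % N = e % N
      rw [he, Int.emod_emod_of_dvd _ dvd_rfl]
    have hq1 : (1 : ℤ) ≤ (q : ℤ) := by exact_mod_cast hq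
    have hNq : N = 2 * (q : ℤ) := rfl
    rcases le_or_gt e (q : ℤ) with hcase | hcase
    · -- take m = q - 1 : σ = 1, σ(q-1+e) = -1
      have hG := G' ((q : ℤ) - 1)
      have hA : σ ((q : ℤ) - 1) = 1 := by
        rw [hσ, if_pos]
        · rw [Int.emod_eq_of_lt (by linarith) (by linarith [hNq])]
          linarith
      have hB : σ ((q : ℤ) - 1 + e) = -1 := by
        rw [hσ, if_neg]
        rw [Int.emod_eq_of_lt (by linarith) (by linarith [hNq])]
        · push_neg; linarith
      rw [hA, hB] at hG
      norm_num at hG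
    · -- take m = q : σ = -1, σ(q+e) = 1
      have hG := G' ((q : ℤ))
      have hA : σ ((q : ℤ)) = -1 := by
        rw [hσ, if_neg]
        rw [Int.emod_eq_of_lt (by linarith) (by linarith [hNq])]
        push_neg; linarith
      have hB : σ ((q : ℤ) + e) = 1 := by
        rw [hσ, if_pos]
        have hrw : (q : ℤ) + e = (e - (q : ℤ)) + 1 * (2 * (q : ℤ)) := by ring
        have hrw2 : e - (q : ℤ) + 1 * (2 * (q : ℤ)) = e - (q : ℤ) + 1 * N := by rw [hNq]
        rw [hrw, hrw2, Int.add_mul_emod_self_right]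
        rw [Int.emod_eq_of_lt (by linarith) (by linarith [hNq])]
        linarith [hNq]
      rw [hA, hB] at hG
      norm_num at hG
  -- conclude
  have : ((2 * q : ℕ) : ℤ) ∣ (c' - c) := by
    have h2 : ((2 * q : ℕ) : ℤ) = N := by push_cast [hN]; ring
    rw [h2]; exact hdvd
  exact Int.modEq_iff_dvd.mpr (by exact_mod_cast this)
end

section
/- Assume gcd(p, 2q) = 1 and q/2 ≤ p < q. Then for any starting point c, the number of sign changes of v_c over one period, i.e., the cardinality of {i ∈ {0, ..., 2q-1} : v_c(i) ≠ v_c(i+1)}, equals exactly 2p. -/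
theorem vertex_sequence_sign_changes
    (p q : ℕ) (hp : 0 < p) (hq : 0 < q) (hgcd : Nat.gcd p (2 * q) = 1)
    (hlow : q ≤ 2 * p) (hhigh : p < q) (σ : ℤ → ℤ)
    (hσ : ∀ m : ℤ, σ m = if m % (2 * (q : ℤ)) < (q : ℤ) then 1 else -1)
    (v : ℤ → ℕ → ℤ) (hv : ∀ (c : ℤ) (i : ℕ), v c i = σ (c + (i : ℤ) * (p : ℤ))) :
    ∀ c : ℤ,
      ((Finset.range (2 * q)).filter (fun i => v c i ≠ v c (i + 1))).card = 2 * p := by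
  intro c
  set N : ℤ := 2 * (q : ℤ) with hNdef
  have hN0 : (0:ℤ) < N := by positivity
  -- σ depends only on residue mod N
  have hσmod : ∀ a b : ℤ, a % N = b % N → σ a = σ b := by
    intro a b h
    rw [hσ, hσ, h]
  -- the map
  set f : ℕ → ℕ := fun i => ((c + (i:ℤ) * p) % N).toNat with hfdef
  have hfval : ∀ i : ℕ, ((f i : ℤ)) = (c + (i:ℤ) * p) % N := by
    intro i
    simp only [hfdef]
    exact Int.toNat_of_nonneg (Int.emod_nonneg _ (ne_of_gt hN0))
  have hflt : ∀ i : ℕ, f i < 2 * q := by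
    intro i
    have h1 : (c + (i:ℤ) * p) % N < N := Int.emod_lt_of_pos _ hN0
    have := hfval i
    omega
  -- coprimality in ℤ
  have hcop : IsCoprime (N) ((p:ℤ)) := by
    rw [Int.isCoprime_iff_gcd_eq_one]
    have : Int.gcd N (p:ℤ) = Nat.gcd (2*q) p := by
      simp [Int.gcd, hNdef]
      norm_cast
    rw [this, Nat.gcd_comm]
    exact hgcd
  have hfinj : ∀ i j : ℕ, i < 2 * q → j < 2 * q → f i = f j → i = j := by
    intro i j hi hj hfeq
    have h1 : (c + (i:ℤ) * p) % N = (c + (j:ℤ) * p) % N := by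
      rw [← hfval i, ← hfval j, hfeq]
    have h2 : N ∣ ((i:ℤ) - j) * p := by
      have heq : (c + (j:ℤ)*p) - (c + (i:ℤ)*p) = ((j:ℤ) - i) * p := by ring
      have h3 : N ∣ ((j:ℤ) - i) * p := heq ▸ Int.ModEq.dvd h1
      have : ((i:ℤ) - j) * p = -(((j:ℤ) - i) * p) := by ring
      rw [this]
      exact dvd_neg.mpr h3
    have h3 : N ∣ ((i:ℤ) - j) := hcop.dvd_of_dvd_mul_right h2
    have h4 : ((i:ℤ) - j).natAbs < N.natAbs := by
      simp only [hNdef]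
      omega
    have h5 := Int.eq_zero_of_dvd_of_natAbs_lt_natAbs h3 h4
    omega
  -- surjectivity via image cardinality
  have hfsurj : ∀ m, m < 2 * q → ∃ i, i < 2 * q ∧ f i = m := by
    intro m hm
    have himg : (Finset.range (2*q)).image f ⊆ Finset.range (2*q) := by
      intro x hx
      simp only [Finset.mem_image, Finset.mem_range] at hx ⊢
      obtain ⟨i, hi, rfl⟩ := hx
      exact hflt i
    have hcard : ((Finset.range (2*q)).image f).card = 2 * q := by
      rw [Finset.card_image_of_injOn]
      · exact Finset.card_range _
      · intro a ha b hb hab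
        exact hfinj a b (Finset.mem_range.mp ha) (Finset.mem_range.mp hb) hab
    have heq : (Finset.range (2*q)).image f = Finset.range (2*q) :=
      Finset.eq_of_subset_of_card_le himg (by rw [hcard, Finset.card_range])
    have : m ∈ (Finset.range (2*q)).image f := by
      rw [heq]; exact Finset.mem_range.mpr hm
    simp only [Finset.mem_image, Finset.mem_range] at this
    obtain ⟨i, hi, hif⟩ := this
    exact ⟨i, hi, hif⟩
  -- the key equivalence
  have hkey : ∀ i : ℕ, (v c i ≠ v c (i+1)) ↔
      ((q - p ≤ f i ∧ f i < q) ∨ 2 * q - p ≤ f i) := by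
    intro i
    have hm := hfval i
    set m : ℤ := (c + (i:ℤ) * p) % N with hmdef
    have hm0 : 0 ≤ m := Int.emod_nonneg _ (ne_of_gt hN0)
    have hmN : m < N := Int.emod_lt_of_pos _ hN0
    have h1 : v c i = σ m := by
      rw [hv]
      exact hσmod _ _ (by rw [hmdef, Int.emod_emod_of_dvd _ (dvd_refl N)])
    have h2 : v c (i+1) = σ (m + p) := by
      rw [hv]
      apply hσmod
      have heq : (c + ((i:ℕ)+1 : ℕ) * (p:ℤ)) = (c + (i:ℤ)*p) + p := by push_cast; ring
      rw [heq]
      have hme : (c + (i:ℤ)*p) % N = m % N := (Int.emod_emod_of_dvd _ (dvd_refl N)).symm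
      exact Int.ModEq.add_right (p:ℤ) hme
    rw [h1, h2, hσ, hσ]
    have hmm : m % N = m := Int.emod_eq_of_lt hm0 hmN
    have hmp : (m + p) % N = if m + p < N then m + p else m + p - N := by
      split_ifs with h
      · exact Int.emod_eq_of_lt (by positivity) h
      · have hsub : (m + p - N) % N = (m + p) % N := by
          rw [Int.sub_emod, Int.emod_self, sub_zero, Int.emod_emod_of_dvd _ (dvd_refl N)]
        rw [← hsub]
        apply Int.emod_eq_of_lt
        · omega
        · have : (p:ℤ) < q := by exact_mod_cast hhigh
          omega
    rw [hmm, hmp]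
    have hpq : (p:ℤ) < q := by exact_mod_cast hhigh
    have hfi := hflt i
    split_ifs <;> simp <;> omega
  -- transfer cardinality
  set T : Finset ℕ := (Finset.range (2*q)).filter
      (fun m => (q - p ≤ m ∧ m < q) ∨ 2 * q - p ≤ m) with hTdef
  have hcardeq : ((Finset.range (2 * q)).filter (fun i => v c i ≠ v c (i + 1))).card = T.card := by
    apply Finset.card_bij (fun i _ => f i)
    · intro a ha
      simp only [Finset.mem_filter, Finset.mem_range] at ha
      simp only [hTdef, Finset.mem_filter, Finset.mem_range]
      exact ⟨hflt a, (hkey a).mp ha.2⟩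
    · intro a ha b hb hab
      simp only [Finset.mem_filter, Finset.mem_range] at ha hb
      exact hfinj a b ha.1 hb.1 hab
    · intro m hm
      simp only [hTdef, Finset.mem_filter, Finset.mem_range] at hm
      obtain ⟨i, hi, hif⟩ := hfsurj m hm.1
      refine ⟨i, ?_, hif⟩
      simp only [Finset.mem_filter, Finset.mem_range]
      refine ⟨hi, (hkey i).mpr ?_⟩
      rw [hif]; exact hm.2
  rw [hcardeq]
  -- compute card of T
  have hT : T = Finset.Ico (q - p) q ∪ Finset.Ico (2*q - p) (2*q) := by
    ext m
    simp only [hTdef, Finset.mem_filter, Finset.mem_range, Finset.mem_union, Finset.mem_Ico]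
    omega
  rw [hT, Finset.card_union_of_disjoint]
  · rw [Nat.card_Ico, Nat.card_Ico]
    omega
  · rw [Finset.disjoint_left]
    intro a ha hb
    simp only [Finset.mem_Ico] at ha hb
    omega
end

section
/- Suppose gcd(p, 2q) = 1. Then for distinct residues c, c' modulo 2q, the infinite sequences v_c and v_{c'} are distinct; equivalently, if σ(c + i·p) = σ(c' + i·p) for all i ∈ ℕ then c ≡ c' (mod 2q). -/
/-!
Since `p` is invertible modulo `2q`, every residue class is hit by `c + i p` for some `i ∈ ℕ`,
so agreement of `v_c` and `v_{c'}` says that the `2q`-periodic square wave `σ` is invariant under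
translation by `d = c' - c`. Evaluating at `0` and at `-d` shows that `d` and `-d` both have
residue below `q` modulo `2q`; as these residues add up to a multiple of `2q`, both vanish.
-/

theorem Function.Periodic.eq_of_modEq {α : Type*} {f : ℤ → α} {n : ℤ} (hf : f.Periodic n)
    {a b : ℤ} (hab : a ≡ b [ZMOD n]) : f b = f a := by
  obtain ⟨k, hk⟩ := hab.dvd
  rw [show b = a + k * n by linarith]
  simpa using hf.int_mul k a

theorem Int.exists_nat_mul_modEq {p n : ℤ} (hp : IsCoprime p n) (hn : n ≠ 0) (r : ℤ) :
    ∃ i : ℕ, (i : ℤ) * p ≡ r [ZMOD n] := by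
  obtain ⟨a, b, hab⟩ := hp
  refine ⟨(r * a % n).toNat, ?_⟩
  rw [Int.toNat_of_nonneg (Int.emod_nonneg _ hn)]
  calc r * a % n * p ≡ r * a * p [ZMOD n] := (Int.mod_modEq _ _).mul_right _
    _ = r + n * (-(r * b)) := by linear_combination r * hab
    _ ≡ r [ZMOD n] := Int.modEq_add_fac_self

theorem Function.Periodic.apply_add_sub_eq_of_agree_on_progressions {α : Type*} {f : ℤ → α}
    {n p : ℤ} (hf : f.Periodic n) (hn : n ≠ 0) (hp : IsCoprime p n) {c c' : ℤ}
    (h : ∀ i : ℕ, f (c + i * p) = f (c' + i * p)) (t : ℤ) : f (t + (c' - c)) = f t := by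
  obtain ⟨i, hi⟩ := Int.exists_nat_mul_modEq hp hn (t - c)
  calc f (t + (c' - c)) = f (c' + i * p) :=
        hf.eq_of_modEq (by convert hi.add_left c' using 1; ring)
    _ = f (c + i * p) := (h i).symm
    _ = f t := (hf.eq_of_modEq (by convert hi.add_left c using 1; ring)).symm

def squareWave (q m : ℤ) : ℤ := if m % (2 * q) < q then 1 else -1

theorem squareWave_eq_one_iff {q m : ℤ} : squareWave q m = 1 ↔ m % (2 * q) < q := by
  unfold squareWave; split_ifs <;> simp_all

theorem squareWave_periodic (q : ℤ) : (squareWave q).Periodic (2 * q) := by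
  intro m
  simp only [squareWave, Int.add_emod_right]

theorem dvd_of_forall_squareWave_add_eq {q d : ℤ} (hq : 0 < q)
    (h : ∀ t, squareWave q (t + d) = squareWave q t) : 2 * q ∣ d := by
  have h0 : squareWave q 0 = 1 := squareWave_eq_one_iff.mpr (by simpa using hq)
  have hpos : d % (2 * q) < q := squareWave_eq_one_iff.mp (by simpa [h0] using h 0)
  have hneg : -d % (2 * q) < q := squareWave_eq_one_iff.mp (by simpa [h0] using (h (-d)).symm)
  have hpos₀ := Int.emod_nonneg d (by omega : 2 * q ≠ 0)
  have hneg₀ := Int.emod_nonneg (-d) (by omega : 2 * q ≠ 0)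
  have hsum : (d % (2 * q) + -d % (2 * q)) % (2 * q) = 0 := by
    rw [← Int.add_emod, add_neg_cancel, Int.zero_emod]
  rw [Int.emod_eq_of_lt (by omega) (by omega)] at hsum
  exact Int.dvd_of_emod_eq_zero (by omega)

theorem vertex_sequences_distinct_general
    (p q : ℕ) (hq : 0 < q) (hgcd : Nat.gcd p (2 * q) = 1) (σ : ℤ → ℤ)
    (hσ : ∀ m : ℤ, σ m = if m % (2 * (q : ℤ)) < (q : ℤ) then 1 else -1)
    (v : ℤ → ℕ → ℤ) (hv : ∀ (c : ℤ) (i : ℕ), v c i = σ (c + (i : ℤ) * (p : ℤ))) :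
    ∀ c c' : ℤ, (∀ i : ℕ, v c i = v c' i) → c ≡ c' [ZMOD (2 * q)] := by
  obtain rfl : σ = squareWave q := funext hσ
  intro c c' h
  have hcop : IsCoprime (p : ℤ) (2 * q) := by
    rw [Int.isCoprime_iff_gcd_eq_one]; exact_mod_cast hgcd
  have hshift := (squareWave_periodic q).apply_add_sub_eq_of_agree_on_progressions
    (by positivity) hcop (fun i => by simpa only [hv] using h i)
  exact Int.modEq_iff_dvd.mpr
    (by exact_mod_cast dvd_of_forall_squareWave_add_eq (by positivity) hshift)

theorem vertex_sequences_distinct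
    (p q : ℕ) (hp : 0 < p) (hq : 0 < q) (hgcd : Nat.gcd p (2 * q) = 1) (σ : ℤ → ℤ)
    (hσ : ∀ m : ℤ, σ m = if m % (2 * (q : ℤ)) < (q : ℤ) then 1 else -1)
    (v : ℤ → ℕ → ℤ) (hv : ∀ (c : ℤ) (i : ℕ), v c i = σ (c + (i : ℤ) * (p : ℤ))) :
    ∀ c c' : ℤ, (∀ i : ℕ, v c i = v c' i) → c ≡ c' [ZMOD (2 * q)] :=
  vertex_sequences_distinct_general p q hq hgcd σ hσ v hv
end
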